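/- (Ordering of the three information matrices for a PQC.) Let D_i = ∂_i ρ(φ), and define, with c^{FB}(a,b) = 2/(a+b), c^{WY}(a,b) = 4/(√a+√b)², and c^{KM}(a,b) = (ln a − ln b)/(a − b) for a ≠ b (and 1/a for a = b), the matrices I^{X}_{ij}(φ) = Σ_{k,ℓ<d} c^{X}(λ_k, λ_ℓ) ⟨k| D_i |ℓ⟩ ⟨ℓ| D_j |k⟩ for X ∈ {FB, WY, KM}. Then for every v ∈ ℝ^J, the quadratic forms q^{X}(v) = Σ_{i,j} v_i v_j I^{X}_{ij}(φ) are real numbers and satisfy q^{KM}(v) ≥ q^{WY}(v) ≥ q^{FB}(v) ≥ (1/2) · q^{WY}(v). -/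

import Mathlib

open Matrix

noncomputable section

attribute [local instance] Matrix.linftyOpNormedAddCommGroup Matrix.linftyOpNormedSpace

/-- Square complex matrices of size `d`. -/
abbrev Mat (d : ℕ) := Matrix (Fin d) (Fin d) ℂ

/-- Descending product `f (a + n - 1) * ⋯ * f (a + 1) * f a` (empty product is `1`). -/
def descProd {d : ℕ} (f : ℕ → Mat d) (a : ℕ) : ℕ → Mat d
  | 0 => 1
  | n + 1 => f (a + n) * descProd f a n

/-- The `j`-th layer `U_j(φ_j) = exp (−i φ_j H_j) V_j`. -/
def layer {d : ℕ} (H V : ℕ → Mat d) (φ : ℕ → ℝ) (j : ℕ) : Mat d :=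
  NormedSpace.exp ((-(Complex.I * (φ j : ℂ))) • H j) * V j

/-- `U_{R_j} = U_j ⋯ U_1`. -/
def UR {d : ℕ} (H V : ℕ → Mat d) (φ : ℕ → ℝ) (j : ℕ) : Mat d :=
  descProd (layer H V φ) 1 j

/-- `U_{L_j} = U_J ⋯ U_j`. -/
def UL {d : ℕ} (H V : ℕ → Mat d) (φ : ℕ → ℝ) (J j : ℕ) : Mat d :=
  descProd (layer H V φ) j (J + 1 - j)

/-- The full layered circuit `U(φ) = U_J ⋯ U_1`. -/
def Ufull {d : ℕ} (H V : ℕ → Mat d) (φ : ℕ → ℝ) (J : ℕ) : Mat d :=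
  UR H V φ J

/-- `B_j = U_{L_{j+1}} H_j U_{L_{j+1}}†`. -/
def Bmat {d : ℕ} (H V : ℕ → Mat d) (φ : ℕ → ℝ) (J j : ℕ) : Mat d :=
  UL H V φ J (j + 1) * H j * (UL H V φ J (j + 1))ᴴ

/-- `A_j = U_{R_j}† H_j U_{R_j}`. -/
def Amat {d : ℕ} (H V : ℕ → Mat d) (φ : ℕ → ℝ) (j : ℕ) : Mat d :=
  (UR H V φ j)ᴴ * H j * UR H V φ j

/-- The thermal state `ρ = e^{−G}/Z`. -/
def thermal {d : ℕ} (G : Mat d) (Z : ℝ) : Mat d :=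
  (Z : ℂ)⁻¹ • NormedSpace.exp (-G)

/-- The parameterized state `ρ(φ) = U(φ) ρ U(φ)†`. -/
def rhoFun {d : ℕ} (H V : ℕ → Mat d) (J : ℕ) (G : Mat d) (Z : ℝ) (φ : ℕ → ℝ) : Mat d :=
  Ufull H V φ J * thermal G Z * (Ufull H V φ J)ᴴ

/-- The sesquilinear form `⟨u| M |v⟩`, conjugate-linear in `u`. -/
def braket {d : ℕ} (u : Fin d → ℂ) (M : Mat d) (v : Fin d → ℂ) : ℂ :=
  star u ⬝ᵥ M.mulVec v

/-- Fisher–Bures coefficient `c^{FB}(a,b) = 2/(a+b)`. -/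
def fbCoeff (a b : ℝ) : ℝ := 2 / (a + b)

/-- Wigner–Yanase coefficient `c^{WY}(a,b) = 4/(√a+√b)²`. -/
def wyCoeff (a b : ℝ) : ℝ := 4 / (Real.sqrt a + Real.sqrt b) ^ 2

/-- Kubo–Mori coefficient `c^{KM}(a,b) = (ln a − ln b)/(a−b)` for `a ≠ b`, `1/a` for `a = b`. -/
def kmCoeff (a b : ℝ) : ℝ :=
  if a = b then 1 / a else (Real.log a - Real.log b) / (a - b)

/-- The partial derivative `D_i = ∂_i ρ(φ) = i [ρ(φ), B_i]`. -/
def Dmat {d : ℕ} (H V : ℕ → Mat d) (J : ℕ) (G : Mat d) (Z : ℝ) (φ : ℕ → ℝ) (i : ℕ) : Mat d :=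
  Complex.I • (rhoFun H V J G Z φ * Bmat H V φ J i - Bmat H V φ J i * rhoFun H V J G Z φ)

/-- The quadratic form `q(v) = Σ_{i,j} v_i v_j Σ_{k,ℓ} c(λ_k,λ_ℓ) ⟨k|D_i|ℓ⟩⟨ℓ|D_j|k⟩`. -/
def quadForm {d J : ℕ} (c : ℝ → ℝ → ℝ) (lam : Fin d → ℝ) (w : Fin d → Fin d → ℂ)
    (D : ℕ → Mat d) (vec : ℕ → ℝ) : ℂ :=
  ∑ i ∈ Finset.Icc 1 J, ∑ j ∈ Finset.Icc 1 J,
    ((vec i * vec j : ℝ) : ℂ) *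
      ∑ k : Fin d, ∑ l : Fin d,
        ((c (lam k) (lam l) : ℝ) : ℂ) * braket (w k) (D i) (w l) * braket (w l) (D j) (w k)

/-! Each `D_i` is Hermitian, hence so is `D_v = Σ vᵢ Dᵢ`, and `⟨ℓ|D_v|k⟩` is the conjugate of
`⟨k|D_v|ℓ⟩`. Therefore `q^X(v) = Σ_{k,ℓ} c^X(λ_k, λ_ℓ) |⟨k|D_v|ℓ⟩|²` is real, and the orderings
reduce to the pointwise inequalities `c^{KM} ≥ c^{WY} ≥ c^{FB} ≥ c^{WY}/2` on positive reals.
The only nontrivial one, `c^{KM} ≥ c^{WY}`, says that the logarithmic mean of `√a` and `√b` is at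
most their arithmetic mean; it follows by keeping only the first term of the series
`log (x/y) = 2 Σ_k ((x-y)/(x+y))^(2k+1) / (2k+1)`, whose terms are all nonnegative for `x > y`. -/

namespace Real

theorem two_mul_sub_div_add_le_log_div {x y : ℝ} (hy : 0 < y) (hyx : y < x) :
    2 * (x - y) / (x + y) ≤ log (x / y) := by
  have hxy : 0 < x - y := sub_pos.2 hyx
  have hsum := hasSum_log_one_add_inv (div_pos hy hxy)
  have hlead := le_hasSum hsum 0 fun _ _ => by positivity
  have hratio : 1 + (y / (x - y))⁻¹ = x / y := by field_simp; ring
  have hterm : 2 * (1 / (2 * ((0 : ℕ) : ℝ) + 1)) * (1 / (2 * (y / (x - y)) + 1)) ^ (2 * 0 + 1)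
      = 2 * (x - y) / (x + y) := by field_simp; ring
  rwa [hratio, hterm] at hlead

end Real

theorem kmCoeff_comm (a b : ℝ) : kmCoeff a b = kmCoeff b a := by
  unfold kmCoeff
  rcases eq_or_ne a b with rfl | h
  · rfl
  · rw [if_neg h, if_neg h.symm, ← neg_div_neg_eq, neg_sub, neg_sub]

theorem wyCoeff_comm (a b : ℝ) : wyCoeff a b = wyCoeff b a := by
  rw [wyCoeff, wyCoeff, add_comm]

theorem fbCoeff_le_wyCoeff {a b : ℝ} (ha : 0 < a) (hb : 0 < b) : fbCoeff a b ≤ wyCoeff a b := by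
  have hsa : √a ^ 2 = a := Real.sq_sqrt ha.le
  have hsb : √b ^ 2 = b := Real.sq_sqrt hb.le
  have hpa : 0 < √a := Real.sqrt_pos.2 ha
  have hpb : 0 < √b := Real.sqrt_pos.2 hb
  rw [fbCoeff, wyCoeff, div_le_div_iff₀ (by positivity) (by positivity)]
  nlinarith [sq_nonneg (√a - √b)]

theorem wyCoeff_div_two_le_fbCoeff {a b : ℝ} (ha : 0 < a) (hb : 0 < b) :
    wyCoeff a b / 2 ≤ fbCoeff a b := by
  have hsa : √a ^ 2 = a := Real.sq_sqrt ha.le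
  have hsb : √b ^ 2 = b := Real.sq_sqrt hb.le
  have hpa : 0 < √a := Real.sqrt_pos.2 ha
  have hpb : 0 < √b := Real.sqrt_pos.2 hb
  rw [fbCoeff, wyCoeff, div_div, div_le_div_iff₀ (by positivity) (by positivity)]
  nlinarith [mul_pos hpa hpb]

theorem wyCoeff_le_kmCoeff {a b : ℝ} (ha : 0 < a) (hb : 0 < b) : wyCoeff a b ≤ kmCoeff a b := by
  wlog hba : b ≤ a generalizing a b
  · rw [wyCoeff_comm, kmCoeff_comm]
    exact this hb ha (le_of_not_ge hba)
  rcases hba.eq_or_lt with rfl | hlt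
  · rw [wyCoeff, kmCoeff, if_pos rfl, ← two_mul, mul_pow, Real.sq_sqrt hb.le]
    field_simp
    norm_num
  have hx : 0 < √a := Real.sqrt_pos.2 ha
  have hy : 0 < √b := Real.sqrt_pos.2 hb
  have hlog := Real.two_mul_sub_div_add_le_log_div hy (Real.sqrt_lt_sqrt hb.le hlt)
  rw [Real.log_div hx.ne' hy.ne', Real.log_sqrt ha.le, Real.log_sqrt hb.le] at hlog
  rw [wyCoeff, kmCoeff, if_neg hlt.ne', le_div_iff₀ (sub_pos.2 hlt)]
  calc 4 / (√a + √b) ^ 2 * (a - b)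
      = 4 / (√a + √b) ^ 2 * ((√a + √b) * (√a - √b)) := by
        rw [← sq_sub_sq, Real.sq_sqrt ha.le, Real.sq_sqrt hb.le]
    _ = 2 * (2 * (√a - √b) / (√a + √b)) := by field_simp; ring
    _ ≤ Real.log a - Real.log b := by linarith

theorem IsSelfAdjoint.I_smul_commutator {A : Type*} [Ring A] [StarRing A] [Module ℂ A]
    [StarModule ℂ A] {a b : A} (ha : IsSelfAdjoint a) (hb : IsSelfAdjoint b) :
    IsSelfAdjoint (Complex.I • (a * b - b * a)) := by
  rw [IsSelfAdjoint, star_smul, star_sub, star_mul, star_mul, ha.star_eq, hb.star_eq,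
    Complex.star_def, Complex.conj_I, neg_smul, ← smul_neg, neg_sub]

section Hermitian

variable {d : ℕ}

theorem thermal_isHermitian {G : Mat d} (hG : G.IsHermitian) (Z : ℝ) :
    (thermal G Z).IsHermitian :=
  hG.neg.exp.smul (by simp [IsSelfAdjoint])

theorem rhoFun_isHermitian (H V : ℕ → Mat d) (J : ℕ) {G : Mat d} (hG : G.IsHermitian) (Z : ℝ)
    (φ : ℕ → ℝ) : (rhoFun H V J G Z φ).IsHermitian :=
  isHermitian_mul_mul_conjTranspose _ (thermal_isHermitian hG Z)

theorem Bmat_isHermitian {H : ℕ → Mat d} (V : ℕ → Mat d) (φ : ℕ → ℝ) (J : ℕ) {j : ℕ}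
    (hH : (H j).IsHermitian) : (Bmat H V φ J j).IsHermitian :=
  isHermitian_mul_mul_conjTranspose _ hH

theorem Dmat_isHermitian {H : ℕ → Mat d} (V : ℕ → Mat d) (J : ℕ) {G : Mat d} (Z : ℝ)
    (φ : ℕ → ℝ) {i : ℕ} (hH : (H i).IsHermitian) (hG : G.IsHermitian) :
    (Dmat H V J G Z φ i).IsHermitian :=
  (rhoFun_isHermitian H V J hG Z φ).isSelfAdjoint.I_smul_commutator
    (Bmat_isHermitian V φ J hH).isSelfAdjoint

theorem star_braket {M : Mat d} (hM : M.IsHermitian) (u v : Fin d → ℂ) :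
    star (braket u M v) = braket v M u := by
  rw [braket, braket, ← star_dotProduct, star_mulVec, hM.eq, dotProduct_mulVec]

theorem braket_sum_smul {ι : Type*} (s : Finset ι) (r : ι → ℝ) (M : ι → Mat d)
    (u v : Fin d → ℂ) :
    braket u (∑ i ∈ s, r i • M i) v = ∑ i ∈ s, (r i : ℂ) * braket u (M i) v := by
  simp only [braket, sum_mulVec, dotProduct_sum, smul_mulVec, dotProduct_smul, Complex.real_smul]

end Hermitian

section QuadForm

variable {d J : ℕ} {lam : Fin d → ℝ} {w : Fin d → Fin d → ℂ} {D : ℕ → Mat d} {vec : ℕ → ℝ}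

theorem quadForm_eq_sum_normSq (c : ℝ → ℝ → ℝ) (hD : ∀ i, (D i).IsHermitian) :
    quadForm (J := J) c lam w D vec =
      ((∑ k, ∑ l, c (lam k) (lam l) *
        Complex.normSq (braket (w k) (∑ i ∈ Finset.Icc 1 J, vec i • D i) (w l)) : ℝ) : ℂ) := by
  have hM : (∑ i ∈ Finset.Icc 1 J, vec i • D i).IsHermitian :=
    isSelfAdjoint_sum _ fun i _ => ((hD i).smul (by simp [IsSelfAdjoint])).isSelfAdjoint
  push_cast
  simp_rw [← Complex.mul_conj, ← Complex.star_def, star_braket hM, braket_sum_smul,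
    Finset.sum_mul_sum, Finset.mul_sum, quadForm]
  simp_rw [Finset.mul_sum, ← Finset.sum_product']
  refine Finset.sum_nbij' (fun x => (x.2.2.1, x.2.2.2, x.1, x.2.1))
    (fun x => (x.2.2.1, x.2.2.2, x.1, x.2.1)) (by simp) (by simp) (by simp) (by simp)
    fun _ _ => by push_cast; ring

theorem quadForm_im_eq_zero {c : ℝ → ℝ → ℝ} (hD : ∀ i, (D i).IsHermitian) :
    (quadForm (J := J) c lam w D vec).im = 0 := by
  rw [quadForm_eq_sum_normSq c hD]
  exact Complex.ofReal_im _

theorem quadForm_re_mono {c c' : ℝ → ℝ → ℝ} (hD : ∀ i, (D i).IsHermitian)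
    (hc : ∀ k l, c (lam k) (lam l) ≤ c' (lam k) (lam l)) :
    (quadForm (J := J) c lam w D vec).re ≤ (quadForm (J := J) c' lam w D vec).re := by
  rw [quadForm_eq_sum_normSq c hD, quadForm_eq_sum_normSq c' hD, Complex.ofReal_re,
    Complex.ofReal_re]
  gcongr with k _ l _
  exacts [Complex.normSq_nonneg _, hc k l]

theorem quadForm_div_const (c : ℝ → ℝ → ℝ) (r : ℝ) :
    quadForm (J := J) (fun a b => c a b / r) lam w D vec = quadForm (J := J) c lam w D vec / r := by
  simp only [quadForm, Finset.sum_div, Finset.mul_sum]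
  refine Finset.sum_congr rfl fun _ _ => Finset.sum_congr rfl fun _ _ =>
    Finset.sum_congr rfl fun _ _ => Finset.sum_congr rfl fun _ _ => ?_
  push_cast
  ring

end QuadForm

theorem info_matrix_ordering_pqc_general {d J : ℕ}
    (H V G : _) (hH : ∀ j, (H j : Mat d).IsHermitian)
    (hG : (G : Mat d).IsHermitian)
    (Z : ℝ)
    (v : Fin d → Fin d → ℂ)
    (lam : Fin d → ℝ) (hlampos : ∀ k, 0 < lam k)
    (φ : ℕ → ℝ) (vec : ℕ → ℝ) :
    ((quadForm (J := J) kmCoeff lam (fun k => (Ufull H V φ J).mulVec (v k))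
          (Dmat H V J G Z φ) vec).im = 0 ∧
        (quadForm (J := J) wyCoeff lam (fun k => (Ufull H V φ J).mulVec (v k))
          (Dmat H V J G Z φ) vec).im = 0 ∧
        (quadForm (J := J) fbCoeff lam (fun k => (Ufull H V φ J).mulVec (v k))
          (Dmat H V J G Z φ) vec).im = 0) ∧
      (quadForm (J := J) wyCoeff lam (fun k => (Ufull H V φ J).mulVec (v k))
            (Dmat H V J G Z φ) vec).re ≤
          (quadForm (J := J) kmCoeff lam (fun k => (Ufull H V φ J).mulVec (v k))
            (Dmat H V J G Z φ) vec).re ∧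
        (quadForm (J := J) fbCoeff lam (fun k => (Ufull H V φ J).mulVec (v k))
            (Dmat H V J G Z φ) vec).re ≤
          (quadForm (J := J) wyCoeff lam (fun k => (Ufull H V φ J).mulVec (v k))
            (Dmat H V J G Z φ) vec).re ∧
        (quadForm (J := J) wyCoeff lam (fun k => (Ufull H V φ J).mulVec (v k))
              (Dmat H V J G Z φ) vec).re / 2 ≤
          (quadForm (J := J) fbCoeff lam (fun k => (Ufull H V φ J).mulVec (v k))
            (Dmat H V J G Z φ) vec).re := by
  have hD : ∀ i, (Dmat H V J G Z φ i).IsHermitian := fun i => Dmat_isHermitian V J Z φ (hH i) hG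
  refine ⟨⟨quadForm_im_eq_zero hD, quadForm_im_eq_zero hD, quadForm_im_eq_zero hD⟩,
    quadForm_re_mono hD fun k l => wyCoeff_le_kmCoeff (hlampos k) (hlampos l),
    quadForm_re_mono hD fun k l => fbCoeff_le_wyCoeff (hlampos k) (hlampos l), ?_⟩
  rw [← Complex.div_ofReal_re, ← quadForm_div_const]
  exact quadForm_re_mono hD fun k l => wyCoeff_div_two_le_fbCoeff (hlampos k) (hlampos l)

/-- Ordering of the Fisher–Bures, Wigner–Yanase, and Kubo–Mori information matrices of a PQC:
the quadratic forms are real and satisfy `q^{KM} ≥ q^{WY} ≥ q^{FB} ≥ q^{WY}/2`. -/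
theorem info_matrix_ordering_pqc {d J : ℕ} (hd : 1 ≤ d)
    (H V G : _) (hH : ∀ j, (H j : Mat d).IsHermitian)
    (hV : ∀ j, V j ∈ Matrix.unitaryGroup (Fin d) ℂ)
    (hG : (G : Mat d).IsHermitian)
    (Z : ℝ) (hZpos : 0 < Z) (hZ : (NormedSpace.exp (-G)).trace = (Z : ℂ))
    (v : Fin d → Fin d → ℂ)
    (hortho : ∀ k l, star (v k) ⬝ᵥ v l = if k = l then 1 else 0)
    (lam : Fin d → ℝ) (hlampos : ∀ k, 0 < lam k)
    (hrhov : ∀ k, (thermal G Z).mulVec (v k) = (lam k : ℂ) • v k)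
    (φ : ℕ → ℝ) (vec : ℕ → ℝ) :
    ((quadForm (J := J) kmCoeff lam (fun k => (Ufull H V φ J).mulVec (v k))
          (Dmat H V J G Z φ) vec).im = 0 ∧
        (quadForm (J := J) wyCoeff lam (fun k => (Ufull H V φ J).mulVec (v k))
          (Dmat H V J G Z φ) vec).im = 0 ∧
        (quadForm (J := J) fbCoeff lam (fun k => (Ufull H V φ J).mulVec (v k))
          (Dmat H V J G Z φ) vec).im = 0) ∧
      (quadForm (J := J) wyCoeff lam (fun k => (Ufull H V φ J).mulVec (v k))
            (Dmat H V J G Z φ) vec).re ≤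
          (quadForm (J := J) kmCoeff lam (fun k => (Ufull H V φ J).mulVec (v k))
            (Dmat H V J G Z φ) vec).re ∧
        (quadForm (J := J) fbCoeff lam (fun k => (Ufull H V φ J).mulVec (v k))
            (Dmat H V J G Z φ) vec).re ≤
          (quadForm (J := J) wyCoeff lam (fun k => (Ufull H V φ J).mulVec (v k))
            (Dmat H V J G Z φ) vec).re ∧
        (quadForm (J := J) wyCoeff lam (fun k => (Ufull H V φ J).mulVec (v k))
              (Dmat H V J G Z φ) vec).re / 2 ≤
          (quadForm (J := J) fbCoeff lam (fun k => (Ufull H V φ J).mulVec (v k))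
            (Dmat H V J G Z φ) vec).re :=
  info_matrix_ordering_pqc_general H V G hH hG Z v lam hlampos φ vec
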